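/- For the timelike multiplier M = r²φ⁻² ∂_r on the expanding region of Schwarzschild-de Sitter, the contraction of the deformation tensor of M with the stress-energy tensor of a scalar field ψ equals K^M[ψ] = -2r(∂_tψ)² - r((2Λ/3)r² - 1 + m/r)|∇̸ψ|², and hence K^M[ψ] ≤ 0 everywhere on the expanding region. -/

import Mathlib

/-!
Write `f = φ⁻² = Λr²/3 - 1 + 2m/r`, so that `M = r²f ∂_r`. The metric is diagonal, its entries
depend on `r` (and `g_φφ` also on `θ`), and `M` has only an `r`-component depending on `r`. Hence
every off-diagonal Christoffel term in `π` drops out and `π` is diagonal, with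
`π^{μμ} = g^{μμ}(∂_μ M^μ + ½ g^{μμ} ∂_r g_{μμ} M^r)`. Contracting with `T`, the `(∂_rψ)²` terms
cancel and `K^M[ψ] = -2r(∂_tψ)² - (f/r + f'/2)((∂_θψ)² + sin⁻²θ (∂_φψ)²)`, where
`f/r + f'/2 = ((2Λ/3)r² - 1 + m/r)/r`.

For the sign: `f → ∞` and `f` has no zero beyond its largest root `r_C`, so `f > 0` there. Moreover
`f(3m) = 3Λm² - 1/3 < 0` by subextremality, which forces `r_C > 3m`; then for `r > r_C`,
`Λr³ > Λr_C³ = 3r_C - 6m > 3m`, i.e. `f'(r) > 0`.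
-/

noncomputable section

/-- Partial derivative `∂_μ f` in coordinates `(x 0, x 1, x 2, x 3) = (r,t,θ,φ)`. -/
def pd (f : (Fin 4 → ℝ) → ℝ) (μ : Fin 4) (x : Fin 4 → ℝ) : ℝ :=
  deriv (fun s => f (Function.update x μ s)) (x μ)

/-- The Schwarzschild-de Sitter metric on the expanding region. -/
def gSdS (Λ m : ℝ) (x : Fin 4 → ℝ) (i j : Fin 4) : ℝ :=
  if i = j then
    (if i = 0 then -(Λ * (x 0) ^ 2 / 3 - 1 + 2 * m / x 0)⁻¹
     else if i = 1 then Λ * (x 0) ^ 2 / 3 - 1 + 2 * m / x 0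
     else if i = 2 then (x 0) ^ 2
     else (x 0) ^ 2 * Real.sin (x 2) ^ 2)
  else 0

/-- The inverse metric (diagonal). -/
def gInv (Λ m : ℝ) (x : Fin 4 → ℝ) (i j : Fin 4) : ℝ :=
  if i = j then (gSdS Λ m x i i)⁻¹ else 0

/-- Christoffel symbols of the Schwarzschild-de Sitter metric. -/
def Γsds (Λ m : ℝ) (l μ ν : Fin 4) (x : Fin 4 → ℝ) : ℝ :=
  (1 / 2) * (gSdS Λ m x l l)⁻¹ *
    (pd (fun y => gSdS Λ m y l ν) μ x + pd (fun y => gSdS Λ m y l μ) ν x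
      - pd (fun y => gSdS Λ m y μ ν) l x)

/-- The timelike multiplier `M = r²φ⁻² ∂_r`. -/
def Mvec (Λ m : ℝ) (x : Fin 4 → ℝ) (i : Fin 4) : ℝ :=
  if i = 0 then (x 0) ^ 2 * (Λ * (x 0) ^ 2 / 3 - 1 + 2 * m / x 0) else 0

/-- The deformation tensor `π^{μν} = ½(∇^μ M^ν + ∇^ν M^μ)` of `M`. -/
def defT (Λ m : ℝ) (x : Fin 4 → ℝ) (μ ν : Fin 4) : ℝ :=
  (1 / 2) *
    ((∑ l : Fin 4, gInv Λ m x μ l * pd (fun y => Mvec Λ m y ν) l x)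
      + (∑ l : Fin 4, gInv Λ m x ν l * pd (fun y => Mvec Λ m y μ) l x)
      + (∑ l : Fin 4, ∑ η : Fin 4, gInv Λ m x μ l * Γsds Λ m ν l η x * Mvec Λ m x η)
      + (∑ l : Fin 4, ∑ η : Fin 4, gInv Λ m x ν l * Γsds Λ m μ l η x * Mvec Λ m x η))

/-- The stress-energy tensor `T_{μν}[ψ] = ∂_μψ∂_νψ - ½ g_{μν} ∂^αψ∂_αψ`. -/
def stressT (Λ m : ℝ) (ψ : (Fin 4 → ℝ) → ℝ) (x : Fin 4 → ℝ) (μ ν : Fin 4) : ℝ :=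
  pd ψ μ x * pd ψ ν x
    - (1 / 2) * gSdS Λ m x μ ν *
        ∑ a : Fin 4, ∑ b : Fin 4, gInv Λ m x a b * pd ψ a x * pd ψ b x

/-- The bulk energy current `K^M[ψ] = π^{μν} T_{μν}[ψ]`. -/
def KM (Λ m : ℝ) (ψ : (Fin 4 → ℝ) → ℝ) (x : Fin 4 → ℝ) : ℝ :=
  ∑ μ : Fin 4, ∑ ν : Fin 4, defT Λ m x μ ν * stressT Λ m ψ x μ ν

open Real Set Filter

def phiInvSq (Λ m r : ℝ) : ℝ := Λ * r ^ 2 / 3 - 1 + 2 * m / r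

lemma hasDerivAt_phiInvSq (Λ m : ℝ) {r : ℝ} (hr : r ≠ 0) :
    HasDerivAt (phiInvSq Λ m) (2 * Λ * r / 3 - 2 * m / r ^ 2) r := by
  have hinv : HasDerivAt (fun s : ℝ => 2 * m / s) (-(2 * m) / r ^ 2) r := by
    have h := (hasDerivAt_inv hr).const_mul (2 * m)
    simp only [← div_eq_mul_inv] at h
    exact h.congr_deriv (by ring)
  exact (((((hasDerivAt_pow 2 r).const_mul Λ).div_const 3).sub_const 1).add hinv).congr_deriv
    (by push_cast; ring)

lemma tendsto_phiInvSq_atTop {Λ : ℝ} (hΛ : 0 < Λ) (m : ℝ) :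
    Tendsto (phiInvSq Λ m) atTop atTop := by
  have hquad : Tendsto (fun r : ℝ => Λ * r ^ 2 / 3 - 1) atTop atTop :=
    tendsto_atTop_add_const_right _ _
      (((tendsto_pow_atTop two_ne_zero).const_mul_atTop hΛ).atTop_div_const three_pos)
  exact hquad.atTop_add (tendsto_const_nhds.div_atTop tendsto_id)

lemma continuousOn_phiInvSq (Λ m : ℝ) : ContinuousOn (phiInvSq Λ m) (Ioi 0) := by
  unfold phiInvSq
  exact ContinuousOn.add (by fun_prop)
    (continuousOn_const.div continuousOn_id fun r hr => (mem_Ioi.mp hr).ne')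

lemma pos_of_tendsto_atTop_of_ne_zero {f : ℝ → ℝ} {a s : ℝ} (hf : ContinuousOn f (Ioi a))
    (htop : Tendsto f atTop atTop) (hne : ∀ t, a < t → f t ≠ 0) (hs : a < s) : 0 < f s := by
  obtain ⟨R, hR, hsR⟩ := ((htop.eventually_gt_atTop 0).and (eventually_ge_atTop s)).exists
  by_contra! hfs
  obtain ⟨t, ht, hft⟩ := intermediate_value_Icc hsR
    (hf.mono fun t ht => hs.trans_le ht.1) ⟨hfs, hR.le⟩
  exact hne t (hs.trans_le ht.1) hft

section Horizon

variable {Λ m rC : ℝ}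

lemma phiInvSq_pos_of_lt (hΛ : 0 < Λ) (hrC : 0 < rC)
    (hlargest : ∀ r : ℝ, 0 < r → phiInvSq Λ m r = 0 → r ≤ rC) {r : ℝ} (hr : rC < r) :
    0 < phiInvSq Λ m r :=
  pos_of_tendsto_atTop_of_ne_zero ((continuousOn_phiInvSq Λ m).mono (Ioi_subset_Ioi hrC.le))
    (tendsto_phiInvSq_atTop hΛ m) (fun t ht h0 => (hlargest t (hrC.trans ht) h0).not_gt ht) hr

lemma three_mul_lt_of_phiInvSq_eq_zero (hΛ : 0 < Λ) (hm : 0 < m) (hsub : 3 * m * √Λ < 1)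
    (hroot : phiInvSq Λ m rC = 0) (hpos : ∀ r, rC < r → 0 < phiInvSq Λ m r) : 3 * m < rC := by
  have h9 : (3 * m * √Λ) ^ 2 < 1 := pow_lt_one₀ (by positivity) hsub two_ne_zero
  rw [mul_pow, sq_sqrt hΛ.le] at h9
  have hneg : phiInvSq Λ m (3 * m) < 0 := by
    have : phiInvSq Λ m (3 * m) = 3 * Λ * m ^ 2 - 1 / 3 := by
      unfold phiInvSq
      field_simp
      ring
    rw [this]
    linarith
  by_contra! h
  rcases h.eq_or_lt with h | h
  · rw [← h, hroot] at hneg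
    exact hneg.false
  · exact (hpos _ h).asymm hneg

lemma deriv_phiInvSq_pos (hΛ : 0 < Λ) (hrC : 0 < rC) (hroot : phiInvSq Λ m rC = 0)
    (h3m : 3 * m < rC) {r : ℝ} (hr : rC < r) : 0 < deriv (phiInvSq Λ m) r := by
  have hr0 : 0 < r := hrC.trans hr
  rw [(hasDerivAt_phiInvSq Λ m hr0.ne').deriv]
  have hcube : Λ * rC ^ 3 = 3 * rC - 6 * m := by
    unfold phiInvSq at hroot
    field_simp at hroot
    linarith
  have hlt : Λ * rC ^ 3 < Λ * r ^ 3 := by gcongr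
  have hnum : 0 < Λ * r ^ 3 - 3 * m := by linarith
  calc (0 : ℝ) < 2 / 3 * ((Λ * r ^ 3 - 3 * m) / r ^ 2) := by positivity
    _ = 2 * Λ * r / 3 - 2 * m / r ^ 2 := by field_simp

end Horizon

lemma phiInvSq_div_add_deriv_div_two (Λ m : ℝ) {r : ℝ} (hr : r ≠ 0) :
    phiInvSq Λ m r / r + deriv (phiInvSq Λ m) r / 2 = (2 * Λ / 3 * r ^ 2 - 1 + m / r) / r := by
  rw [(hasDerivAt_phiInvSq Λ m hr).deriv]
  unfold phiInvSq
  field_simp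
  ring

lemma pd_const (c : ℝ) (μ : Fin 4) (x : Fin 4 → ℝ) : pd (fun _ => c) μ x = 0 := by
  simp [pd]

lemma pd_comp_apply_of_ne (g : ℝ → ℝ) {μ ν : Fin 4} (h : ν ≠ μ) (x : Fin 4 → ℝ) :
    pd (fun y => g (y ν)) μ x = 0 := by
  simp [pd, Function.update_of_ne h]

lemma pd_comp_apply_self {g : ℝ → ℝ} {μ : Fin 4} {x : Fin 4 → ℝ} {d : ℝ}
    (h : HasDerivAt g d (x μ)) : pd (fun y => g (y μ)) μ x = d := by
  simpa [pd] using h.deriv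

section SdS

variable (Λ m : ℝ) (x : Fin 4 → ℝ)

lemma gSdS_of_ne {i j : Fin 4} (h : i ≠ j) : gSdS Λ m x i j = 0 := if_neg h

lemma gSdS_zero_zero : gSdS Λ m x 0 0 = -(phiInvSq Λ m (x 0))⁻¹ := rfl

lemma gSdS_one_one : gSdS Λ m x 1 1 = phiInvSq Λ m (x 0) := rfl

lemma gSdS_two_two : gSdS Λ m x 2 2 = x 0 ^ 2 := rfl

lemma gSdS_three_three : gSdS Λ m x 3 3 = x 0 ^ 2 * sin (x 2) ^ 2 := rfl

lemma Mvec_zero : Mvec Λ m x 0 = x 0 ^ 2 * phiInvSq Λ m (x 0) := rfl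

lemma Mvec_of_ne_zero {i : Fin 4} (h : i ≠ 0) : Mvec Λ m x i = 0 := if_neg h

lemma sum_gInv_mul (μ : Fin 4) (a : Fin 4 → ℝ) :
    ∑ l, gInv Λ m x μ l * a l = (gSdS Λ m x μ μ)⁻¹ * a μ :=
  (Fintype.sum_eq_single μ fun l hl => by simp [gInv, Ne.symm hl]).trans (by simp [gInv])

lemma sum_sum_gInv_mul_mul (a : Fin 4 → ℝ) :
    ∑ i, ∑ j, gInv Λ m x i j * a i * a j = ∑ i, (gSdS Λ m x i i)⁻¹ * a i ^ 2 :=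
  Finset.sum_congr rfl fun i _ =>
    (Fintype.sum_eq_single i fun j hj => by simp [gInv, Ne.symm hj]).trans
      (by simp [gInv, sq, mul_assoc])

lemma sum_mul_Mvec (a : Fin 4 → ℝ) : ∑ η, a η * Mvec Λ m x η = a 0 * Mvec Λ m x 0 :=
  Fintype.sum_eq_single 0 fun η hη => by simp [Mvec_of_ne_zero Λ m x hη]

lemma pd_Mvec_of_ne_zero {ν : Fin 4} (hν : ν ≠ 0) (μ : Fin 4) :
    pd (fun y => Mvec Λ m y ν) μ x = 0 := by
  simp only [Mvec, if_neg hν, pd_const]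

lemma pd_Mvec_of_ne {μ ν : Fin 4} (h : μ ≠ ν) : pd (fun y => Mvec Λ m y ν) μ x = 0 := by
  rcases eq_or_ne ν 0 with rfl | hν
  · exact pd_comp_apply_of_ne (fun r => r ^ 2 * phiInvSq Λ m r) h.symm x
  · exact pd_Mvec_of_ne_zero Λ m x hν μ

lemma pd_gSdS_of_ne {i j : Fin 4} (h : i ≠ j) (μ : Fin 4) :
    pd (fun y => gSdS Λ m y i j) μ x = 0 := by
  simp only [gSdS, if_neg h, pd_const]

lemma pd_gSdS_zero_zero_of_ne {μ : Fin 4} (h : μ ≠ 0) :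
    pd (fun y => gSdS Λ m y 0 0) μ x = 0 :=
  pd_comp_apply_of_ne (fun r => -(phiInvSq Λ m r)⁻¹) h.symm x

lemma pd_gSdS_col_zero {μ ν : Fin 4} (h : ν ≠ μ) : pd (fun y => gSdS Λ m y ν 0) μ x = 0 := by
  rcases eq_or_ne ν 0 with rfl | hν
  · exact pd_gSdS_zero_zero_of_ne Λ m x h.symm
  · exact pd_gSdS_of_ne Λ m x hν μ

variable {Λ m x}

lemma pd_Mvec_zero_zero (hr : x 0 ≠ 0) :
    pd (fun y => Mvec Λ m y 0) 0 x
      = 2 * x 0 * phiInvSq Λ m (x 0) + x 0 ^ 2 * deriv (phiInvSq Λ m) (x 0) :=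
  pd_comp_apply_self (((hasDerivAt_pow 2 _).mul
    (hasDerivAt_phiInvSq Λ m hr).differentiableAt.hasDerivAt).congr_deriv (by push_cast; ring))

lemma pd_gSdS_zero_zero (hr : x 0 ≠ 0) (hf : phiInvSq Λ m (x 0) ≠ 0) :
    pd (fun y => gSdS Λ m y 0 0) 0 x = deriv (phiInvSq Λ m) (x 0) / phiInvSq Λ m (x 0) ^ 2 :=
  pd_comp_apply_self ((((hasDerivAt_phiInvSq Λ m hr).differentiableAt.hasDerivAt).inv hf).neg
    |>.congr_deriv (by ring))

lemma pd_gSdS_one_one (hr : x 0 ≠ 0) :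
    pd (fun y => gSdS Λ m y 1 1) 0 x = deriv (phiInvSq Λ m) (x 0) :=
  pd_comp_apply_self (hasDerivAt_phiInvSq Λ m hr).differentiableAt.hasDerivAt

lemma pd_gSdS_two_two : pd (fun y => gSdS Λ m y 2 2) 0 x = 2 * x 0 :=
  pd_comp_apply_self ((hasDerivAt_pow 2 _).congr_deriv (by push_cast; ring))

lemma pd_gSdS_three_three : pd (fun y => gSdS Λ m y 3 3) 0 x = 2 * x 0 * sin (x 2) ^ 2 := by
  simp only [pd, gSdS_three_three, Function.update_self,
    Function.update_of_ne (show (2 : Fin 4) ≠ 0 by decide)]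
  exact (((hasDerivAt_pow 2 _).mul_const _).congr_deriv (by push_cast; ring)).deriv

variable (Λ m x)

lemma Γsds_self_zero (μ : Fin 4) :
    Γsds Λ m μ μ 0 x = 1 / 2 * (gSdS Λ m x μ μ)⁻¹ * pd (fun y => gSdS Λ m y μ μ) 0 x := by
  unfold Γsds
  ring

lemma Γsds_zero_of_ne {μ ν : Fin 4} (h : ν ≠ μ) : Γsds Λ m ν μ 0 x = 0 := by
  simp only [Γsds, pd_gSdS_col_zero Λ m x h, pd_gSdS_of_ne Λ m x h, pd_gSdS_col_zero Λ m x h.symm]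
  ring

lemma defT_eq (μ ν : Fin 4) :
    defT Λ m x μ ν = 1 / 2 *
      ((gSdS Λ m x μ μ)⁻¹
          * (pd (fun y => Mvec Λ m y ν) μ x + Γsds Λ m ν μ 0 x * Mvec Λ m x 0)
        + (gSdS Λ m x ν ν)⁻¹
          * (pd (fun y => Mvec Λ m y μ) ν x + Γsds Λ m μ ν 0 x * Mvec Λ m x 0)) := by
  simp only [defT, sum_mul_Mvec]
  simp only [mul_assoc, sum_gInv_mul]
  ring

lemma defT_of_ne {μ ν : Fin 4} (h : μ ≠ ν) : defT Λ m x μ ν = 0 := by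
  simp only [defT_eq, pd_Mvec_of_ne Λ m x h, pd_Mvec_of_ne Λ m x h.symm, Γsds_zero_of_ne Λ m x h,
    Γsds_zero_of_ne Λ m x h.symm]
  ring

lemma defT_self (μ : Fin 4) :
    defT Λ m x μ μ = (gSdS Λ m x μ μ)⁻¹ * (pd (fun y => Mvec Λ m y μ) μ x
      + 1 / 2 * (gSdS Λ m x μ μ)⁻¹ * pd (fun y => gSdS Λ m y μ μ) 0 x * Mvec Λ m x 0) := by
  rw [defT_eq, Γsds_self_zero]
  ring

lemma KM_eq_sum_diag (ψ : (Fin 4 → ℝ) → ℝ) :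
    KM Λ m ψ x = ∑ μ, defT Λ m x μ μ * stressT Λ m ψ x μ μ :=
  Finset.sum_congr rfl fun μ _ =>
    Fintype.sum_eq_single μ fun ν hν => by simp [defT_of_ne Λ m x (Ne.symm hν)]

variable {Λ m x}

lemma defT_zero_zero (hr : x 0 ≠ 0) (hf : phiInvSq Λ m (x 0) ≠ 0) :
    defT Λ m x 0 0 = -2 * x 0 * phiInvSq Λ m (x 0) ^ 2
      - x 0 ^ 2 * phiInvSq Λ m (x 0) * deriv (phiInvSq Λ m) (x 0) / 2 := by
  rw [defT_self, pd_Mvec_zero_zero hr, pd_gSdS_zero_zero hr hf, gSdS_zero_zero, Mvec_zero]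
  field_simp
  ring

lemma defT_one_one (hr : x 0 ≠ 0) (hf : phiInvSq Λ m (x 0) ≠ 0) :
    defT Λ m x 1 1 = x 0 ^ 2 * deriv (phiInvSq Λ m) (x 0) / (2 * phiInvSq Λ m (x 0)) := by
  rw [defT_self, pd_Mvec_of_ne_zero Λ m x (by decide), pd_gSdS_one_one hr, gSdS_one_one, Mvec_zero]
  field_simp
  ring

lemma defT_two_two (hr : x 0 ≠ 0) : defT Λ m x 2 2 = phiInvSq Λ m (x 0) / x 0 := by
  rw [defT_self, pd_Mvec_of_ne_zero Λ m x (by decide), pd_gSdS_two_two, gSdS_two_two, Mvec_zero]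
  field_simp
  ring

lemma defT_three_three (hr : x 0 ≠ 0) (hs : sin (x 2) ≠ 0) :
    defT Λ m x 3 3 = phiInvSq Λ m (x 0) / (x 0 * sin (x 2) ^ 2) := by
  rw [defT_self, pd_Mvec_of_ne_zero Λ m x (by decide), pd_gSdS_three_three, gSdS_three_three,
    Mvec_zero]
  field_simp
  ring

lemma KM_eq (ψ : (Fin 4 → ℝ) → ℝ) (hr : x 0 ≠ 0) (hf : phiInvSq Λ m (x 0) ≠ 0)
    (hs : sin (x 2) ≠ 0) :
    KM Λ m ψ x = -2 * x 0 * pd ψ 1 x ^ 2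
      - (phiInvSq Λ m (x 0) / x 0 + deriv (phiInvSq Λ m) (x 0) / 2)
        * (pd ψ 2 x ^ 2 + pd ψ 3 x ^ 2 / sin (x 2) ^ 2) := by
  rw [KM_eq_sum_diag, Fin.sum_univ_four, defT_zero_zero hr hf, defT_one_one hr hf, defT_two_two hr,
    defT_three_three hr hs]
  simp only [stressT, sum_sum_gInv_mul_mul]
  simp only [Fin.sum_univ_four, gSdS_zero_zero, gSdS_one_one, gSdS_two_two, gSdS_three_three,
    inv_neg, inv_inv]
  field_simp
  ring

end SdS

/-- **Nonpositivity of the bulk current of the multiplier `M = r²φ⁻²∂_r`.**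
On the expanding region `r > r_C` of subextremal Schwarzschild-de Sitter,
`K^M[ψ] = -2r(∂_tψ)² - r((2Λ/3)r² - 1 + m/r)|∇̸ψ|² ≤ 0`, where
`|∇̸ψ|² = r⁻²(∂_θψ)² + r⁻²sin⁻²θ(∂_φψ)²`. -/
theorem stmt_12 (Λ m rC : ℝ) (hΛ : 0 < Λ) (hm : 0 < m)
    (hsub : 3 * m * Real.sqrt Λ < 1)
    (hrC : 0 < rC) (hroot : Λ * rC ^ 2 / 3 - 1 + 2 * m / rC = 0)
    (hlargest : ∀ r : ℝ, 0 < r → Λ * r ^ 2 / 3 - 1 + 2 * m / r = 0 → r ≤ rC)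
    (ψ : (Fin 4 → ℝ) → ℝ) (x : Fin 4 → ℝ) (hr : rC < x 0)
    (hs : Real.sin (x 2) ≠ 0) :
    KM Λ m ψ x
      = -2 * x 0 * (pd ψ 1 x) ^ 2
        - x 0 * (2 * Λ / 3 * (x 0) ^ 2 - 1 + m / x 0) *
            ((pd ψ 2 x) ^ 2 / (x 0) ^ 2
              + (pd ψ 3 x) ^ 2 / ((x 0) ^ 2 * Real.sin (x 2) ^ 2)) ∧
    KM Λ m ψ x ≤ 0 := by
  have hx : 0 < x 0 := hrC.trans hr
  have hpos : ∀ r, rC < r → 0 < phiInvSq Λ m r := fun r => phiInvSq_pos_of_lt hΛ hrC hlargest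
  have hf := hpos _ hr
  have hderiv : 0 < deriv (phiInvSq Λ m) (x 0) :=
    deriv_phiInvSq_pos hΛ hrC hroot (three_mul_lt_of_phiInvSq_eq_zero hΛ hm hsub hroot hpos) hr
  have hK := KM_eq ψ hx.ne' hf.ne' hs
  constructor
  · rw [hK, phiInvSq_div_add_deriv_div_two Λ m hx.ne']
    field_simp
  · have htime : 0 ≤ x 0 * pd ψ 1 x ^ 2 := by positivity
    have hangular : 0 ≤ (phiInvSq Λ m (x 0) / x 0 + deriv (phiInvSq Λ m) (x 0) / 2)
        * (pd ψ 2 x ^ 2 + pd ψ 3 x ^ 2 / sin (x 2) ^ 2) := by positivity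
    rw [hK]
    linarith

end
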